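/- arXiv:quant-ph/0210064 — 4 statements merged into one kernel-verified Lean document; each statement's English description precedes it below -/
import Mathlib

section
/- The unperturbed quantum walk operator U = S·(G ⊗ I) on the hypercube commutes with every bit-swap permutation operator P_{ij}, where P_{ij} simultaneously swaps bits i and j of the node label and swaps coin directions i and j. -/
/-!
Relabelling the coordinates by a permutation `σ` permutes the basis by `|d, x⟩ ↦ |σ d, x ∘ σ⁻¹⟩`,
and `P_{ij}` is the permutation matrix of this relabelling for `σ = (i j)`. A matrix commutes with
a permutation matrix as soon as its entries are invariant under the permutation. `G ⊗ I` is
invariant because `G` only depends on whether `d = e`, and `S` is invariant because `σ` carries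
the unit vector `e_d` to `e_{σ d}`; hence so is `U = S (G ⊗ I)`.
-/

open Matrix Kronecker

/-- The hypercube shift operator `S|d,x⟩ = |d, x ⊕ e_d⟩`. -/
noncomputable def hypercubeShift (n : ℕ) :
    Matrix (Fin n × (Fin n → ZMod 2)) (Fin n × (Fin n → ZMod 2)) ℂ :=
  fun p q => if p.1 = q.1 ∧ p.2 = q.2 + Pi.single q.1 1 then 1 else 0

/-- The Grover diffusion coin `G = -I + 2|s⟩⟨s|` on `ℂ^n`. -/
noncomputable def groverCoin (n : ℕ) : Matrix (Fin n) (Fin n) ℂ :=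
  fun d e => (if d = e then -1 else 0) + 2 / (n : ℂ)

/-- The unperturbed walk operator `U = S · (G ⊗ I)`. -/
noncomputable def walkU (n : ℕ) :
    Matrix (Fin n × (Fin n → ZMod 2)) (Fin n × (Fin n → ZMod 2)) ℂ :=
  hypercubeShift n * (groverCoin n ⊗ₖ (1 : Matrix (Fin n → ZMod 2) (Fin n → ZMod 2) ℂ))

/-- The bit-swap operator `P_{ij}|d,x⟩ = |σ(d), x∘σ⟩` where `σ = (i j)`. -/
noncomputable def bitSwap (n : ℕ) (i j : Fin n) :
    Matrix (Fin n × (Fin n → ZMod 2)) (Fin n × (Fin n → ZMod 2)) ℂ :=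
  fun p q => if p.1 = Equiv.swap i j q.1 ∧ p.2 = q.2 ∘ Equiv.swap i j then 1 else 0

theorem Matrix.commute_permMatrix_of_submatrix_eq {ι R : Type*} [Fintype ι] [DecidableEq ι]
    [NonAssocSemiring R] {M : Matrix ι ι R} (σ : Equiv.Perm ι) (hM : M.submatrix σ σ = M) :
    Commute M (σ.permMatrix R) := by
  change M * σ.toPEquiv.toMatrix = σ.toPEquiv.toMatrix * M
  rw [PEquiv.mul_toMatrix_toPEquiv, PEquiv.toMatrix_toPEquiv_mul]
  conv_lhs => rw [← hM]
  ext p q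
  simp

def hypercubeRelabel {n : ℕ} (σ : Equiv.Perm (Fin n)) :
    Equiv.Perm (Fin n × (Fin n → ZMod 2)) :=
  σ.prodCongr (σ.arrowCongr (Equiv.refl _))

theorem groverCoin_submatrix_perm {n : ℕ} (σ : Equiv.Perm (Fin n)) :
    (groverCoin n).submatrix σ σ = groverCoin n := by
  ext d e
  simp [groverCoin, σ.injective.eq_iff]

theorem groverCoin_kronecker_one_submatrix_hypercubeRelabel {n : ℕ} (σ : Equiv.Perm (Fin n)) :
    (groverCoin n ⊗ₖ (1 : Matrix (Fin n → ZMod 2) (Fin n → ZMod 2) ℂ)).submatrix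
      (hypercubeRelabel σ) (hypercubeRelabel σ) =
      groverCoin n ⊗ₖ (1 : Matrix (Fin n → ZMod 2) (Fin n → ZMod 2) ℂ) := by
  conv_rhs => rw [← groverCoin_submatrix_perm σ,
    ← submatrix_one_equiv (σ.arrowCongr (Equiv.refl (ZMod 2)))]
  exact (kroneckerMap_submatrix_submatrix _ _ _ _ _ _ _).symm

theorem hypercubeShift_submatrix_hypercubeRelabel {n : ℕ} (σ : Equiv.Perm (Fin n)) :
    (hypercubeShift n).submatrix (hypercubeRelabel σ) (hypercubeRelabel σ) = hypercubeShift n := by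
  ext ⟨d, x⟩ ⟨e, y⟩
  have hsingle : (Pi.single (σ e) 1 : Fin n → ZMod 2) =
      σ.arrowCongr (Equiv.refl _) (Pi.single e 1) := by
    change _ = Pi.single e 1 ∘ σ.symm
    rw [Pi.single_comp_equiv, Equiv.symm_symm]
  have hshift : σ.arrowCongr (Equiv.refl _) x =
      σ.arrowCongr (Equiv.refl _) y + Pi.single (σ e) 1 ↔ x = y + Pi.single e 1 := by
    rw [hsingle, ← (σ.arrowCongr (Equiv.refl _)).apply_eq_iff_eq (y := y + Pi.single e 1)]
    rfl
  simp only [hypercubeShift, hypercubeRelabel, submatrix_apply, Equiv.prodCongr_apply, Prod.map,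
    σ.injective.eq_iff, hshift]

theorem walkU_submatrix_hypercubeRelabel {n : ℕ} (σ : Equiv.Perm (Fin n)) :
    (walkU n).submatrix (hypercubeRelabel σ) (hypercubeRelabel σ) = walkU n := by
  rw [walkU, ← submatrix_mul_equiv _ _ _ (hypercubeRelabel σ),
    hypercubeShift_submatrix_hypercubeRelabel, groverCoin_kronecker_one_submatrix_hypercubeRelabel]

theorem bitSwap_eq_permMatrix {n : ℕ} (i j : Fin n) :
    bitSwap n i j = (hypercubeRelabel (Equiv.swap i j)).permMatrix ℂ := by
  ext ⟨d, x⟩ ⟨e, y⟩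
  simp [bitSwap, hypercubeRelabel, ← Equiv.eq_symm_apply]
  rfl

theorem walkU_commutes_bitSwap_general (n : ℕ) (i j : Fin n) :
    walkU n * bitSwap n i j = bitSwap n i j * walkU n := by
  rw [bitSwap_eq_permMatrix]
  exact commute_permMatrix_of_submatrix_eq _ (walkU_submatrix_hypercubeRelabel _)

/-- The unperturbed hypercube walk commutes with every bit-swap `P_{ij}`. -/
theorem walkU_commutes_bitSwap (n : ℕ) (hn : 2 ≤ n) (i j : Fin n) :
    walkU n * bitSwap n i j = bitSwap n i j * walkU n :=
  walkU_commutes_bitSwap_general n i j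
end

section
/- The perturbed walk operator U' = U − 2 S·(|s^C⟩⟨s^C| ⊗ |0⟩⟨0|), where the marked node is the all-zeros string, commutes with every bit-swap permutation P_{ij}. -/
open Matrix Kronecker

/-- The rank-one coin projector `|s^C⟩⟨s^C|`, all of whose entries equal `1/n`. -/
noncomputable def coinProj (n : ℕ) : Matrix (Fin n) (Fin n) ℂ :=
  fun _ _ => 1 / (n : ℂ)

/-- The projector `|0⃗⟩⟨0⃗|` onto the marked (all-zeros) node. -/
noncomputable def markProj (n : ℕ) :
    Matrix (Fin n → ZMod 2) (Fin n → ZMod 2) ℂ :=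
  fun x y => if x = 0 ∧ y = 0 then 1 else 0

/-- The perturbed walk operator `U' = U − 2 S·(|s^C⟩⟨s^C| ⊗ |0⃗⟩⟨0⃗|)`. -/
noncomputable def walkU' (n : ℕ) :
    Matrix (Fin n × (Fin n → ZMod 2)) (Fin n × (Fin n → ZMod 2)) ℂ :=
  walkU n - 2 • (hypercubeShift n * (coinProj n ⊗ₖ markProj n))

namespace WalkAux

variable {n : ℕ} (i j : Fin n)

/-- The state permutation underlying `bitSwap`. -/
def f (i j : Fin n) (p : Fin n × (Fin n → ZMod 2)) : Fin n × (Fin n → ZMod 2) :=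
  (Equiv.swap i j p.1, p.2 ∘ Equiv.swap i j)

lemma comp_swap_swap (u : Fin n → ZMod 2) :
    (u ∘ ⇑(Equiv.swap i j)) ∘ ⇑(Equiv.swap i j) = u := by
  funext k; simp [Function.comp]

lemma f_f (p : Fin n × (Fin n → ZMod 2)) : f i j (f i j p) = p := by
  simp [f, comp_swap_swap]

lemma comp_swap_inj {u v : Fin n → ZMod 2} :
    u ∘ ⇑(Equiv.swap i j) = v ∘ ⇑(Equiv.swap i j) ↔ u = v := by
  constructor
  · intro h
    funext k
    have := congrFun h (Equiv.swap i j k)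
    simpa [Function.comp] using this
  · rintro rfl; rfl

lemma comp_swap_zero {u : Fin n → ZMod 2} :
    u ∘ ⇑(Equiv.swap i j) = 0 ↔ u = 0 := by
  constructor
  · intro h
    funext k
    have := congrFun h (Equiv.swap i j k)
    simpa [Function.comp] using this
  · rintro rfl; funext k; rfl

lemma single_comp_swap (d : Fin n) :
    (Pi.single d (1 : ZMod 2)) ∘ ⇑(Equiv.swap i j) = Pi.single (Equiv.swap i j d) 1 := by
  funext k
  simp only [Function.comp, Pi.single_apply]
  congr 1
  simp only [eq_iff_iff]
  constructor
  · intro h; rw [← h, Equiv.swap_apply_self]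
  · intro h; rw [h, Equiv.swap_apply_self]

lemma add_single_comp_swap (x : Fin n → ZMod 2) (d : Fin n) :
    x ∘ ⇑(Equiv.swap i j) + Pi.single (Equiv.swap i j d) 1
      = (x + Pi.single d 1) ∘ ⇑(Equiv.swap i j) := by
  rw [← single_comp_swap]; rfl

lemma mul_bitSwap (A : Matrix (Fin n × (Fin n → ZMod 2)) (Fin n × (Fin n → ZMod 2)) ℂ)
    (p q : Fin n × (Fin n → ZMod 2)) :
    (A * bitSwap n i j) p q = A p (f i j q) := by
  rw [Matrix.mul_apply, Finset.sum_eq_single (f i j q)]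
  · simp [bitSwap, f]
  · intro r _ hr
    have h : ¬(r.1 = Equiv.swap i j q.1 ∧ r.2 = q.2 ∘ ⇑(Equiv.swap i j)) := by
      rintro ⟨h1, h2⟩
      exact hr (Prod.ext h1 h2)
    simp [bitSwap, h]
  · simp

lemma bitSwap_mul (A : Matrix (Fin n × (Fin n → ZMod 2)) (Fin n × (Fin n → ZMod 2)) ℂ)
    (p q : Fin n × (Fin n → ZMod 2)) :
    (bitSwap n i j * A) p q = A (f i j p) q := by
  rw [Matrix.mul_apply, Finset.sum_eq_single (f i j p)]
  · simp [bitSwap, f, comp_swap_swap]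
  · intro r _ hr
    have h : ¬(p.1 = Equiv.swap i j r.1 ∧ p.2 = r.2 ∘ ⇑(Equiv.swap i j)) := by
      rintro ⟨h1, h2⟩
      apply hr
      apply Prod.ext
      · rw [f, h1, Equiv.swap_apply_self]
      · show r.2 = p.2 ∘ ⇑(Equiv.swap i j)
        rw [h2, comp_swap_swap]
    simp [bitSwap, h]
  · simp

lemma shift_mul (A : Matrix (Fin n × (Fin n → ZMod 2)) (Fin n × (Fin n → ZMod 2)) ℂ)
    (p q : Fin n × (Fin n → ZMod 2)) :
    (hypercubeShift n * A) p q = A (p.1, p.2 + Pi.single p.1 1) q := by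
  have hss : ∀ v : Fin n → ZMod 2, v + v = 0 := by
    intro v; funext k
    show v k + v k = 0
    exact CharTwo.add_self_eq_zero _
  rw [Matrix.mul_apply, Finset.sum_eq_single ((p.1, p.2 + Pi.single p.1 1) : Fin n × (Fin n → ZMod 2))]
  · have : p.2 = p.2 + Pi.single p.1 1 + Pi.single p.1 1 := by
      rw [add_assoc, hss, add_zero]
    simp [hypercubeShift, ← this]
  · intro r _ hr
    have h : ¬(p.1 = r.1 ∧ p.2 = r.2 + Pi.single r.1 1) := by
      rintro ⟨h1, h2⟩
      apply hr
      have h3 : r.2 = p.2 + Pi.single p.1 1 := by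
        rw [h2, h1, add_assoc, hss, add_zero]
      exact Prod.ext_iff.mpr ⟨h1.symm, h3⟩
    simp [hypercubeShift, h]
  · simp

lemma walkU'_apply (d e : Fin n) (x y : Fin n → ZMod 2) :
    walkU' n (d, x) (e, y)
      = groverCoin n d e * (if x + Pi.single d 1 = y then 1 else 0)
        - 2 * ((1 / (n : ℂ)) * (if x + Pi.single d 1 = 0 ∧ y = 0 then 1 else 0)) := by
  rw [walkU', Matrix.sub_apply, Matrix.smul_apply, walkU, shift_mul, shift_mul]
  simp [Matrix.kroneckerMap_apply, coinProj, markProj, Matrix.one_apply, eq_comm]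

lemma walkU'_f_f (p q : Fin n × (Fin n → ZMod 2)) :
    walkU' n (f i j p) (f i j q) = walkU' n p q := by
  obtain ⟨d, x⟩ := p
  obtain ⟨e, y⟩ := q
  show walkU' n (Equiv.swap i j d, x ∘ ⇑(Equiv.swap i j))
      (Equiv.swap i j e, y ∘ ⇑(Equiv.swap i j)) = _
  rw [walkU'_apply, walkU'_apply]
  simp only [add_single_comp_swap, comp_swap_inj, comp_swap_zero, groverCoin,
    EmbeddingLike.apply_eq_iff_eq]

end WalkAux

/-- The perturbed hypercube walk commutes with every bit-swap `P_{ij}`. -/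
theorem walkU'_commutes_bitSwap (n : ℕ) (hn : 2 ≤ n) (i j : Fin n) :
    walkU' n * bitSwap n i j = bitSwap n i j * walkU' n := by
  ext p q
  rw [WalkAux.mul_bitSwap, WalkAux.bitSwap_mul]
  calc walkU' n p (WalkAux.f i j q)
      = walkU' n (WalkAux.f i j (WalkAux.f i j p)) (WalkAux.f i j q) := by
        rw [WalkAux.f_f]
    _ = walkU' n (WalkAux.f i j p) q := WalkAux.walkU'_f_f i j _ _
end

section
/- The normalization constant c defined by c² = Σ_{x=0}^{n/2−1} 1/C(n−1,x) satisfies 1 < c² < 1 + 2/n for all sufficiently large even n. -/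
lemma choose_mono_half (m : ℕ) : ∀ b, b ≤ m / 2 → ∀ a, a ≤ b → m.choose a ≤ m.choose b := by
  intro b
  induction b with
  | zero => intro _ a ha; simp [Nat.le_zero.mp ha]
  | succ b ih =>
    intro hb a ha
    rcases Nat.lt_or_ge a (b + 1) with h | h
    · exact le_trans (ih (le_trans (Nat.le_succ b) hb) a (Nat.lt_succ_iff.mp h))
        (Nat.choose_le_succ_of_lt_half_left (Nat.lt_of_succ_le hb))
    · have : a = b + 1 := le_antisymm ha h
      simp [this]

/-- The normalization constant `c² = Σ_{x=0}^{n/2−1} 1/C(n−1,x)` satisfies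
`1 < c² < 1 + 2/n` for all sufficiently large even `n`. -/
theorem normalization_constant_bounds :
    ∃ N : ℕ, ∀ n : ℕ, N ≤ n → Even n →
      1 < (∑ x ∈ Finset.range (n / 2), (1 : ℝ) / ((n - 1).choose x)) ∧
      (∑ x ∈ Finset.range (n / 2), (1 : ℝ) / ((n - 1).choose x)) < 1 + 2 / n := by
  use 6
  intro n hn hev
  obtain ⟨k, hk⟩ := hev
  subst hk
  have hk3 : 3 ≤ k := by omega
  have hhalf : (k + k) / 2 = k := by omega
  rw [hhalf]
  set m : ℕ := k + k - 1 with hm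
  have hmcast : (m : ℝ) = 2 * (k : ℝ) - 1 := by
    have : m = 2 * k - 1 := by omega
    rw [this]
    push_cast [Nat.cast_sub (by omega : 1 ≤ 2 * k)]
    ring
  have hK : (3 : ℝ) ≤ (k : ℝ) := by exact_mod_cast hk3
  have hchoose2 : m.choose 2 = (2 * k - 1) * (k - 1) := by
    rw [Nat.choose_two_right]
    have h3 : m * (m - 1) = (2 * k - 1) * (k - 1) * 2 := by
      have hm2 : m - 1 = (k - 1) * 2 := by omega
      have hm1 : m = 2 * k - 1 := by omega
      rw [hm2, hm1]; ring
    rw [h3, Nat.mul_div_cancel _ two_pos]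
  have hchoose2cast : ((m.choose 2 : ℕ) : ℝ) = (2 * (k : ℝ) - 1) * ((k : ℝ) - 1) := by
    rw [hchoose2]
    push_cast [Nat.cast_sub (by omega : 1 ≤ 2 * k), Nat.cast_sub (by omega : 1 ≤ k)]
    ring
  have hpos2 : (0 : ℝ) < ((m.choose 2 : ℕ) : ℝ) := by
    rw [hchoose2cast]; nlinarith
  constructor
  · -- lower bound
    have hsub : Finset.range 2 ⊆ Finset.range k := by
      apply Finset.range_subset_range.mpr; omega
    have h2 : ∑ x ∈ Finset.range 2, (1 : ℝ) / ((m.choose x : ℕ) : ℝ) ≤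
        ∑ x ∈ Finset.range k, (1 : ℝ) / ((m.choose x : ℕ) : ℝ) := by
      apply Finset.sum_le_sum_of_subset_of_nonneg hsub
      intro i _ _
      positivity
    calc (1 : ℝ) < ∑ x ∈ Finset.range 2, (1 : ℝ) / ((m.choose x : ℕ) : ℝ) := by
          rw [Finset.sum_range_succ, Finset.sum_range_one]
          simp only [Nat.choose_zero_right, Nat.choose_one_right]
          have hmpos : (0 : ℝ) < (m : ℝ) := by rw [hmcast]; linarith
          have : (0 : ℝ) < 1 / (m : ℝ) := by positivity
          simp only [Nat.cast_one]
          linarith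
      _ ≤ _ := h2
  · -- upper bound
    have hsplit : ∑ x ∈ Finset.range k, (1 : ℝ) / ((m.choose x : ℕ) : ℝ) =
        (∑ x ∈ Finset.range 2, (1 : ℝ) / ((m.choose x : ℕ) : ℝ)) +
        ∑ x ∈ Finset.Ico 2 k, (1 : ℝ) / ((m.choose x : ℕ) : ℝ) := by
      simp only [Finset.range_eq_Ico]
      exact (Finset.sum_Ico_consecutive _ (by omega : 0 ≤ 2) (by omega : 2 ≤ k)).symm
    have hbound : ∑ x ∈ Finset.Ico 2 k, (1 : ℝ) / ((m.choose x : ℕ) : ℝ) ≤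
        (k - 2 : ℕ) • ((1 : ℝ) / ((m.choose 2 : ℕ) : ℝ)) := by
      have hcard : (Finset.Ico 2 k).card = k - 2 := by
        rw [Nat.card_Ico]
      rw [← hcard]
      apply Finset.sum_le_card_nsmul
      intro x hx
      rw [Finset.mem_Ico] at hx
      have hle : m.choose 2 ≤ m.choose x := by
        apply choose_mono_half m x (by omega) 2 hx.1
      apply one_div_le_one_div_of_le hpos2
      exact_mod_cast hle
    rw [hsplit]
    have h12 : ∑ x ∈ Finset.range 2, (1 : ℝ) / ((m.choose x : ℕ) : ℝ) =
        1 + 1 / (m : ℝ) := by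
      rw [Finset.sum_range_succ, Finset.sum_range_one]
      simp [Nat.choose_zero_right, Nat.choose_one_right]
    rw [h12]
    have hk2cast : ((k - 2 : ℕ) : ℝ) = (k : ℝ) - 2 := by
      push_cast [Nat.cast_sub (by omega : 2 ≤ k)]; ring
    rw [nsmul_eq_mul, hk2cast, hchoose2cast] at hbound
    have hmpos : (0 : ℝ) < 2 * (k : ℝ) - 1 := by linarith
    have key : 1 / (2 * (k : ℝ) - 1) + ((k : ℝ) - 2) * (1 / ((2 * (k : ℝ) - 1) * ((k : ℝ) - 1)))
        < 2 / ((k : ℝ) + (k : ℝ)) := by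
      rw [mul_one_div, div_add_div _ _ (by linarith) (by nlinarith),
        div_lt_div_iff₀ (by nlinarith) (by linarith)]
      nlinarith
    rw [hmcast]
    push_cast
    linarith [hbound, key]
end

section
/- Let U be unitary on a finite-dimensional Hilbert space with exactly one eigenvalue λ₀ (counted without multiplicity, with one-dimensional eigenspace spanned by unit vector v₀) satisfying Re λ ≥ 1 − δ, and suppose all other eigenvalues satisfy Re λ ≤ 1 − δ. If ψ is a unit vector with Re⟨ψ|U|ψ⟩ ≥ 1 − ε where ε < δ, then |⟨v₀|ψ⟩|² ≥ 1 − ε/δ. -/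
/-!
On a subspace `K` invariant under a normal operator `T` and its adjoint, the Hermitian part `ℜ T`
commutes with `T`, so each of its eigenspaces inside `K` contains an eigenvector of `T`, on which
`ℜ T` acts by the real part of the `T`-eigenvalue. Hence if every eigenvalue of `T` on `K` has real
part at most `c`, so does the largest Rayleigh quotient of `ℜ T` on `K` (itself an eigenvalue):
`Re⟨x, T x⟩ ≤ c ‖x‖²` on `K`.

For the unitary `U` take `K = v₀ᗮ`, which is invariant because `v₀` is an eigenvector of `U` and
of `U⋆`; simplicity of `λ₀` gives `c = 1 − δ`. Writing `ψ = a v₀ + w` with `w ∈ K`,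
`1 − ε ≤ Re⟨ψ, U ψ⟩ = |a|² Re λ₀ + Re⟨w, U w⟩ ≤ |a|² + (1 − δ)(1 − |a|²)`.
-/

open Module End
open scoped InnerProductSpace ComplexConjugate ComplexStarModule

theorem Module.End.exists_hasEigenvector_mem_of_invariant {K V : Type*} [Field K] [IsAlgClosed K]
    [AddCommGroup V] [Module K V] [FiniteDimensional K V] (f : End K V) {p : Submodule K V}
    (hp : p ≠ ⊥) (hfp : ∀ x ∈ p, f x ∈ p) : ∃ μ, ∃ v ∈ p, f.HasEigenvector μ v := by
  have : Nontrivial p := Submodule.nontrivial_iff_ne_bot.mpr hp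
  obtain ⟨μ, hμ⟩ := exists_eigenvalue (f.restrict hfp)
  obtain ⟨w, hw⟩ := hμ.exists_hasEigenvector
  refine ⟨μ, w, w.2, hasEigenvector_iff.mpr ⟨?_, by simpa using hw.2⟩⟩
  exact eigenspace_restrict_le_eigenspace f hfp μ ⟨w, hw.1, rfl⟩

theorem LinearMap.IsSymmetric.re_inner_apply_self_le {𝕜 F : Type*} [RCLike 𝕜]
    [NormedAddCommGroup F] [InnerProductSpace 𝕜 F] [FiniteDimensional 𝕜 F] {S : F →ₗ[𝕜] F}
    (hS : S.IsSymmetric) {c : ℝ} (hc : ∀ μ, HasEigenvalue S μ → RCLike.re μ ≤ c) (x : F) :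
    RCLike.re ⟪S x, x⟫_𝕜 ≤ c * ‖x‖ ^ 2 := by
  obtain rfl | hx := eq_or_ne x 0
  · simp
  have : Nontrivial F := ⟨⟨x, 0, hx⟩⟩
  have hsup := hc _ hS.hasEigenvalue_iSup_of_finiteDimensional
  rw [RCLike.ofReal_re] at hsup
  have hbdd :
      BddAbove (Set.range fun y : {y : F // y ≠ 0} ↦ RCLike.re ⟪S y, y⟫_𝕜 / ‖(y : F)‖ ^ 2) :=
    ⟨‖LinearMap.toContinuousLinearMap S‖, Set.forall_mem_range.mpr fun y ↦
      (le_abs_self _).trans ((LinearMap.toContinuousLinearMap S).rayleighQuotient_le_norm y)⟩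
  rw [← div_le_iff₀ (by positivity)]
  exact (le_ciSup hbdd ⟨x, hx⟩).trans hsup

theorem IsStarNormal.commute_realPart {A : Type*} [Ring A] [StarRing A] [Algebra ℂ A]
    [StarModule ℂ A] (a : A) [IsStarNormal a] : Commute a (ℜ a) := by
  rw [realPart_apply_coe]
  exact ((Commute.refl a).add_right (star_comm_self' a).symm).smul_right _

namespace ContinuousLinearMap

theorem IsStarNormal.adjoint_apply_eq_conj_smul {𝕜 E : Type*} [RCLike 𝕜] [NormedAddCommGroup E]
    [InnerProductSpace 𝕜 E] [CompleteSpace E] {T : E →L[𝕜] E} [IsStarNormal T] {μ : 𝕜} {v : E}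
    (h : T v = μ • v) : adjoint T v = conj μ • v := by
  have hμ : Commute T (star (μ • 1 : E →L[𝕜] E)) := by
    rw [star_smul, star_one]
    exact (Commute.one_right T).smul_right _
  have := (IsStarNormal.adjoint_apply_eq_zero_iff hμ.isStarNormal_sub v).mpr (by simp [h])
  rw [← star_eq_adjoint, star_sub, star_smul, star_one, sub_apply, sub_eq_zero] at this
  simpa [star_eq_adjoint] using this

theorem norm_eq_one_of_mem_unitary_of_apply_eq_smul {𝕜 E : Type*} [RCLike 𝕜]
    [NormedAddCommGroup E] [InnerProductSpace 𝕜 E] [CompleteSpace E] {u : E →L[𝕜] E}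
    (hu : u ∈ unitary (E →L[𝕜] E)) {μ : 𝕜} {v : E} (hv : v ≠ 0) (h : u v = μ • v) : ‖μ‖ = 1 := by
  have := norm_map_of_mem_unitary hu v
  rw [h, norm_smul] at this
  exact (mul_eq_right₀ (norm_ne_zero_iff.mpr hv)).mp this

theorem apply_mem_orthogonal_singleton_of_adjoint_apply_eq_smul {𝕜 E : Type*} [RCLike 𝕜]
    [NormedAddCommGroup E] [InnerProductSpace 𝕜 E] [CompleteSpace E] {T : E →L[𝕜] E} {μ : 𝕜}
    {v : E} (h : adjoint T v = μ • v) {y : E} (hy : y ∈ (𝕜 ∙ v)ᗮ) : T y ∈ (𝕜 ∙ v)ᗮ := by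
  rw [Submodule.mem_orthogonal_singleton_iff_inner_right] at hy ⊢
  rw [← adjoint_inner_left, h, inner_smul_left, hy, mul_zero]

variable {E : Type*} [NormedAddCommGroup E] [InnerProductSpace ℂ E]

theorem re_inner_realPart_apply [CompleteSpace E] (A : E →L[ℂ] E) (x : E) :
    (⟪x, (ℜ A : E →L[ℂ] E) x⟫_ℂ).re = (⟪x, A x⟫_ℂ).re := by
  rw [realPart_apply_coe, star_eq_adjoint, smul_apply, add_apply, inner_smul_right_eq_smul,
    Complex.smul_re, inner_add_right, adjoint_inner_right, ← inner_conj_symm x (A x),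
    Complex.add_re, Complex.conj_re]
  ring

theorem IsStarNormal.realPart_apply_of_apply_eq_smul [CompleteSpace E] {T : E →L[ℂ] E}
    [IsStarNormal T] {μ : ℂ} {v : E} (h : T v = μ • v) : (ℜ T : E →L[ℂ] E) v = (μ.re : ℂ) • v := by
  rw [realPart_apply_coe, star_eq_adjoint]
  simp only [smul_apply, add_apply, h, IsStarNormal.adjoint_apply_eq_conj_smul h, ← add_smul,
    Complex.add_conj]
  module

variable [FiniteDimensional ℂ E]

theorem IsStarNormal.re_inner_apply_self_le_of_invariant {T : E →L[ℂ] E} [IsStarNormal T]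
    {K : Submodule ℂ E} (hTK : ∀ x ∈ K, T x ∈ K) (hTK' : ∀ x ∈ K, adjoint T x ∈ K) {c : ℝ}
    (hc : ∀ μ : ℂ, ∀ v ∈ K, v ≠ 0 → T v = μ • v → μ.re ≤ c) {x : E} (hx : x ∈ K) :
    (⟪x, T x⟫_ℂ).re ≤ c * ‖x‖ ^ 2 := by
  set H : E →ₗ[ℂ] E := ((ℜ T : E →L[ℂ] E) : E →ₗ[ℂ] E)
  have hHK : ∀ y ∈ K, H y ∈ K := fun y hy ↦ by
    simpa [H, realPart_apply_coe, star_eq_adjoint] using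
      K.smul_of_tower_mem (2⁻¹ : ℝ) (K.add_mem (hTK y hy) (hTK' y hy))
  have hev : ∀ e, HasEigenvalue (H.restrict hHK) e → e.re ≤ c := by
    intro e he
    obtain ⟨w, hw⟩ := he.exists_hasEigenvector
    set W := K ⊓ eigenspace H e
    have hW : W ≠ ⊥ := (Submodule.ne_bot_iff W).mpr
      ⟨w, ⟨w.2, eigenspace_restrict_le_eigenspace H hHK e ⟨w, hw.1, rfl⟩⟩, by simpa using hw.2⟩
    have hTW : ∀ y ∈ W, T y ∈ W := by
      rintro y ⟨hyK, hyH⟩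
      refine ⟨hTK y hyK, ?_⟩
      rw [SetLike.mem_coe, mem_eigenspace_iff] at hyH ⊢
      have := congr($((IsStarNormal.commute_realPart T).eq) y)
      calc H (T y) = T (H y) := by simpa [H] using this.symm
        _ = e • T y := by rw [hyH, map_smul]
    obtain ⟨μ, v, ⟨hvK, hvH⟩, hv⟩ :=
      Module.End.exists_hasEigenvector_mem_of_invariant (T : E →ₗ[ℂ] E) hW hTW
    have hTv : T v = μ • v := hv.apply_eq_smul
    have he : e = μ.re := by
      rw [SetLike.mem_coe, mem_eigenspace_iff] at hvH
      simp only [H, coe_coe, IsStarNormal.realPart_apply_of_apply_eq_smul hTv] at hvH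
      exact smul_left_injective ℂ hv.2 hvH.symm
    rw [he, Complex.ofReal_re]
    exact hc μ v hvK hv.2 hTv
  have hsymm : (H.restrict hHK).IsSymmetric := (ℜ T).2.isSymmetric.restrict_invariant hHK
  rw [← re_inner_realPart_apply, ← inner_conj_symm, Complex.conj_re]
  simpa [H] using hsymm.re_inner_apply_self_le hev ⟨x, hx⟩

theorem IsStarNormal.re_inner_apply_self_le_of_simple_eigenvalue {T : E →L[ℂ] E} [IsStarNormal T]
    {μ₀ : ℂ} {v₀ : E} (hv₀ : ‖v₀‖ = 1) (hTv₀ : T v₀ = μ₀ • v₀)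
    (hspan : ∀ v, T v = μ₀ • v → ∃ a : ℂ, v = a • v₀) {c : ℝ}
    (hc : ∀ (μ : ℂ) (v : E), v ≠ 0 → T v = μ • v → μ ≠ μ₀ → μ.re ≤ c) (x : E) :
    (⟪x, T x⟫_ℂ).re ≤ c * (‖x‖ ^ 2 - ‖⟪v₀, x⟫_ℂ‖ ^ 2) + μ₀.re * ‖⟪v₀, x⟫_ℂ‖ ^ 2 := by
  set K := (ℂ ∙ v₀)ᗮ
  have hv₀v₀ : ⟪v₀, v₀⟫_ℂ = 1 := by simp [inner_self_eq_norm_sq_to_K, hv₀]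
  have hTK : ∀ y ∈ K, T y ∈ K := fun _ ↦
    apply_mem_orthogonal_singleton_of_adjoint_apply_eq_smul
      (IsStarNormal.adjoint_apply_eq_conj_smul hTv₀)
  have hTK' : ∀ y ∈ K, adjoint T y ∈ K := fun _ ↦
    apply_mem_orthogonal_singleton_of_adjoint_apply_eq_smul (by rwa [adjoint_adjoint])
  have hcK : ∀ μ : ℂ, ∀ v ∈ K, v ≠ 0 → T v = μ • v → μ.re ≤ c := by
    intro μ v hvK hv hTv
    refine hc μ v hv hTv ?_
    rintro rfl
    obtain ⟨a, rfl⟩ := hspan v hTv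
    rw [Submodule.mem_orthogonal_singleton_iff_inner_right, inner_smul_right, hv₀v₀,
      mul_one] at hvK
    simp [hvK] at hv
  set a := ⟪v₀, x⟫_ℂ
  set w := x - a • v₀
  have hwK : w ∈ K := by
    simp [K, Submodule.mem_orthogonal_singleton_iff_inner_right, w, inner_sub_right,
      inner_smul_right, hv₀, a]
  have hv₀w : ⟪v₀, w⟫_ℂ = 0 := Submodule.mem_orthogonal_singleton_iff_inner_right.mp hwK
  have hv₀Tw : ⟪v₀, T w⟫_ℂ = 0 :=
    Submodule.mem_orthogonal_singleton_iff_inner_right.mp (hTK w hwK)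
  have hx : x = a • v₀ + w := by simp [w]
  have hnorm : ‖x‖ ^ 2 = ‖a‖ ^ 2 + ‖w‖ ^ 2 := by
    rw [hx, sq, norm_add_sq_eq_norm_sq_add_norm_sq_of_inner_eq_zero _ _
      (by rw [inner_smul_left, hv₀w, mul_zero]), norm_smul, hv₀]
    ring
  have hinner : ⟪x, T x⟫_ℂ = (‖a‖ ^ 2 : ℂ) * μ₀ + ⟪w, T w⟫_ℂ := by
    rw [hx, map_add, map_smul, hTv₀]
    simp only [inner_add_left, inner_add_right, inner_smul_left, inner_smul_right, hv₀v₀, hv₀Tw,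
      inner_eq_zero_symm.mp hv₀w, ← Complex.conj_mul']
    ring
  have hw := IsStarNormal.re_inner_apply_self_le_of_invariant hTK hTK' hcK hwK
  rw [hinner, Complex.add_re, ← Complex.ofReal_pow, Complex.re_ofReal_mul, hnorm]
  linarith

end ContinuousLinearMap

open ContinuousLinearMap Matrix

section Matrix

variable {𝕜 n : Type*} [RCLike 𝕜] [Fintype n]

theorem Matrix.star_dotProduct_eq_inner (v w : n → 𝕜) :
    star v ⬝ᵥ w = ⟪WithLp.toLp 2 v, WithLp.toLp 2 w⟫_𝕜 := by
  rw [EuclideanSpace.inner_toLp_toLp, dotProduct_comm]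

theorem EuclideanSpace.norm_toLp_eq_one {v : n → 𝕜} (hv : star v ⬝ᵥ v = 1) :
    ‖WithLp.toLp 2 v‖ = 1 := by
  have h2 : ‖WithLp.toLp 2 v‖ ^ 2 = 1 := by
    rw [← inner_self_eq_norm_sq (𝕜 := 𝕜), ← star_dotProduct_eq_inner, hv, RCLike.one_re]
  exact (pow_eq_one_iff_of_nonneg (norm_nonneg _) two_ne_zero).mp h2

theorem Matrix.toEuclideanCLM_apply_eq_smul_iff [DecidableEq n] (A : Matrix n n 𝕜) (μ : 𝕜)
    (v : EuclideanSpace 𝕜 n) : toEuclideanCLM (n := n) (𝕜 := 𝕜) A v = μ • v ↔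
      A *ᵥ v.ofLp = μ • v.ofLp := by
  rw [← (WithLp.ofLp_injective _).eq_iff]
  rfl

end Matrix

/-- If a unitary `U` has a unique eigenvalue `λ₀` with `Re λ₀ ≥ 1 − δ`, with
one-dimensional eigenspace spanned by the unit vector `v₀`, all other
eigenvalues having real part at most `1 − δ`, and `ψ` is a unit vector with
`Re⟨ψ|U|ψ⟩ ≥ 1 − ε` where `ε < δ`, then `|⟨v₀|ψ⟩|² ≥ 1 − ε/δ`. -/
theorem overlap_lower_bound (m : ℕ)
    (U : Matrix (Fin m) (Fin m) ℂ) (hU : U ∈ Matrix.unitaryGroup (Fin m) ℂ)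
    (lam0 : ℂ) (v0 : Fin m → ℂ) (hv0 : star v0 ⬝ᵥ v0 = 1)
    (heig : U.mulVec v0 = lam0 • v0)
    (hspan : ∀ v : Fin m → ℂ, U.mulVec v = lam0 • v → ∃ c : ℂ, v = c • v0)
    (δ ε : ℝ) (hδ : 0 < ε) (hεδ : ε < δ)
    (hother : ∀ (mu : ℂ) (v : Fin m → ℂ), v ≠ 0 → U.mulVec v = mu • v →
      mu ≠ lam0 → mu.re ≤ 1 - δ)
    (ψ : Fin m → ℂ) (hψ : star ψ ⬝ᵥ ψ = 1)
    (h : (star ψ ⬝ᵥ U.mulVec ψ).re ≥ 1 - ε) :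
    ‖star v0 ⬝ᵥ ψ‖ ^ 2 ≥ 1 - ε / δ := by
  set T := toEuclideanCLM (𝕜 := ℂ) U
  have hT : T ∈ unitary _ := Unitary.map_mem _ hU
  have : IsStarNormal T := isStarNormal_of_mem_unitary hT
  have hv0' := EuclideanSpace.norm_toLp_eq_one hv0
  have hTeig := toEuclideanCLM_apply_eq_smul_iff U
  have heig' : T (WithLp.toLp 2 v0) = lam0 • WithLp.toLp 2 v0 := (hTeig _ _).mpr heig
  have hbound := IsStarNormal.re_inner_apply_self_le_of_simple_eigenvalue hv0' heig'
    (fun v hv ↦ by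
      obtain ⟨a, ha⟩ := hspan _ ((hTeig _ _).mp hv)
      exact ⟨a, WithLp.ofLp_injective _ (by simp [ha])⟩)
    (fun μ v hv hTv hμ ↦ hother μ v.ofLp (by simpa using hv) ((hTeig _ _).mp hTv) hμ)
    (WithLp.toLp 2 ψ)
  simp only [T, toEuclideanCLM_toLp, ← star_dotProduct_eq_inner,
    EuclideanSpace.norm_toLp_eq_one hψ] at hbound
  have hlam0 : lam0.re ≤ 1 :=
    (Complex.re_le_norm lam0).trans (norm_eq_one_of_mem_unitary_of_apply_eq_smul hT
      (norm_ne_zero_iff.mp (hv0' ▸ one_ne_zero)) heig').le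
  have hδ' : 0 < δ := hδ.trans hεδ
  have hoverlap : δ - ε ≤ δ * ‖star v0 ⬝ᵥ ψ‖ ^ 2 := by
    nlinarith [mul_le_mul_of_nonneg_right hlam0 (sq_nonneg ‖star v0 ⬝ᵥ ψ‖)]
  rw [ge_iff_le, one_sub_div hδ'.ne', div_le_iff₀ hδ']
  linarith
end
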